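/- Let V be a real inner product space of finite dimension n ≥ 4, let R be an algebraic curvature tensor on V, let {e₁,…,e_n} be an orthonormal basis of V, and let S₀ = (1/(n(n−1)))·Σ_{i,j=1}^{n} R(e_i,e_j,e_i,e_j) be the normalized scalar curvature of R. If for all orthonormal pairs {u,v} in V one has R(u,v,u,v) > (n(n−1)/(n²−n+12))·S₀, then R has positive isotropic curvature, i.e. for every orthonormal four-frame {f₁,f₂,f₃,f₄} in V one has R(f₁,f₃,f₁,f₃) + R(f₁,f₄,f₁,f₄) + R(f₂,f₃,f₂,f₃) + R(f₂,f₄,f₂,f₄) − 2·R(f₁,f₂,f₃,f₄) > 0. -/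

import Mathlib

open scoped RealInnerProductSpace

variable {V : Type*} [NormedAddCommGroup V] [InnerProductSpace ℝ V]

/-- An algebraic curvature tensor on a real inner product space `V`:
an `ℝ`-multilinear map `V × V × V × V → ℝ` with the standard symmetries and
the first Bianchi identity. -/
def IsCurvatureTensor (R : V →ₗ[ℝ] V →ₗ[ℝ] V →ₗ[ℝ] V →ₗ[ℝ] ℝ) : Prop :=
  (∀ X Y Z W : V, R X Y Z W = - R Y X Z W) ∧
  (∀ X Y Z W : V, R X Y Z W = - R X Y W Z) ∧
  (∀ X Y Z W : V, R X Y Z W = R Z W X Y) ∧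
  (∀ X Y Z W : V, R X Y Z W + R X Z W Y + R X W Y Z = 0)

/-- An orthonormal four-frame: four pairwise orthogonal unit vectors. -/
def OrthonormalFrame4 (e₁ e₂ e₃ e₄ : V) : Prop :=
  ‖e₁‖ = 1 ∧ ‖e₂‖ = 1 ∧ ‖e₃‖ = 1 ∧ ‖e₄‖ = 1 ∧
  ⟪e₁, e₂⟫ = 0 ∧ ⟪e₁, e₃⟫ = 0 ∧ ⟪e₁, e₄⟫ = 0 ∧
  ⟪e₂, e₃⟫ = 0 ∧ ⟪e₂, e₄⟫ = 0 ∧ ⟪e₃, e₄⟫ = 0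

/-!
The scalar sum `∑ᵢⱼ R(eᵢ,eⱼ,eᵢ,eⱼ)` does not depend on the orthonormal basis, and under the
hypothesis it equals `(n² - n + 12) m`, where `m` is the pinching bound. Extending an orthonormal
four-frame `(u₁, u₂, u₃, u₄)` to a basis and bounding the other `n² - n - 4` ordered pairs below
by `m` gives `K(u₁,u₂) + K(u₃,u₄) ≤ 8m`. Applied to the rotated frames
`((f₁ ± f₃)/√2, (f₂ ± f₄)/√2)` and `((f₁ ± f₄)/√2, (f₂ ∓ f₃)/√2)`, together with the lower bound
`m` on the mixed sectional curvatures, polarization and the Bianchi identity, this yields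
`R(f₁,f₂,f₃,f₄) < 2m`, while each of the four sectional curvatures in the isotropic sum exceeds `m`.
-/
open InnerProductSpace TensorProduct in
theorem OrthonormalBasis.sum_apply_self_eq [FiniteDimensional ℝ V] {ι ι' : Type*} [Fintype ι]
    [Fintype ι'] (B : V →ₗ[ℝ] V →ₗ[ℝ] ℝ) (b : OrthonormalBasis ι ℝ V)
    (b' : OrthonormalBasis ι' ℝ V) :
    ∑ i, B (b i) (b i) = ∑ i, B (b' i) (b' i) := by
  simp only [← lift.tmul, ← map_sum, ← canonicalCovariantTensor_eq_sum]

theorem Orthonormal.exists_orthonormalBasis_comp [FiniteDimensional ℝ V] {κ : Type*} {w : κ → V}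
    (hw : Orthonormal ℝ w) :
    ∃ (s : Finset V) (b : OrthonormalBasis s ℝ V) (e : κ → s), ⇑b ∘ e = w := by
  have hw' := (orthonormal_subtype_range hw.linearIndependent.injective).2 hw
  obtain ⟨s, b, hws, hb⟩ := hw'.exists_orthonormalBasis_extension
  exact ⟨s, b, fun k => ⟨w k, hws ⟨k, rfl⟩⟩, by ext k; simp [hb]⟩

theorem OrthonormalFrame4.orthonormal {e₁ e₂ e₃ e₄ : V} (hf : OrthonormalFrame4 e₁ e₂ e₃ e₄) :
    Orthonormal ℝ ![e₁, e₂, e₃, e₄] := by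
  obtain ⟨h₁, h₂, h₃, h₄, h₁₂, h₁₃, h₁₄, h₂₃, h₂₄, h₃₄⟩ := hf
  rw [orthonormal_iff_ite]
  intro i j
  fin_cases i <;> fin_cases j <;> simp [*] <;> rwa [real_inner_comm]

theorem OrthonormalFrame4.rotate {x y z t : V} (hf : OrthonormalFrame4 x y z t) :
    OrthonormalFrame4 ((√2)⁻¹ • (x + z)) ((√2)⁻¹ • (y + t)) ((√2)⁻¹ • (x - z))
      ((√2)⁻¹ • (y - t)) := by
  obtain ⟨hx, hy, hz, ht, hxy, hxz, hxt, hyz, hyt, hzt⟩ := hf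
  have hnorm : ∀ {a b : V}, ‖a‖ = 1 → ‖b‖ = 1 → ⟪a, b⟫ = 0 →
      ‖(√2)⁻¹ • (a + b)‖ = 1 ∧ ‖(√2)⁻¹ • (a - b)‖ = 1 := by
    intro a b ha hb hab
    have h2 : (√2)⁻¹ ^ 2 = (2 : ℝ)⁻¹ := by simp
    constructor <;> refine (pow_eq_one_iff_of_nonneg (norm_nonneg _) two_ne_zero).1 ?_ <;>
      simp only [norm_smul, mul_pow, norm_add_sq_real, norm_sub_sq_real, Real.norm_eq_abs, sq_abs,
        h2, ha, hb, hab] <;> norm_num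
  have horth : ∀ {a b : V}, ⟪a, b⟫ = 0 → ⟪(√2)⁻¹ • a, (√2)⁻¹ • b⟫ = 0 := by
    intro a b hab
    simp [real_inner_smul_left, real_inner_smul_right, hab]
  have hsq : ‖x‖ ^ 2 = ‖z‖ ^ 2 ∧ ‖y‖ ^ 2 = ‖t‖ ^ 2 := by simp [hx, hy, hz, ht]
  refine ⟨(hnorm hx hz hxz).1, (hnorm hy ht hyt).1, (hnorm hx hz hxz).2, (hnorm hy ht hyt).2,
    ?_, ?_, ?_, ?_, ?_, ?_⟩ <;> apply horth <;>
  simp only [inner_add_left, inner_add_right, inner_sub_left, inner_sub_right,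
    real_inner_self_eq_norm_sq] <;>
  linarith [real_inner_comm x y, real_inner_comm x t, real_inner_comm z y, real_inner_comm z t,
    real_inner_comm x z, real_inner_comm y t]

namespace IsCurvatureTensor

variable {R : V →ₗ[ℝ] V →ₗ[ℝ] V →ₗ[ℝ] V →ₗ[ℝ] ℝ} {m : ℝ}

theorem apply_self_left (hR : IsCurvatureTensor R) (x z w : V) : R x x z w = 0 := by
  linarith [hR.1 x x z w]

theorem sectional_comm (hR : IsCurvatureTensor R) (x y : V) : R y x y x = R x y x y := by
  rw [hR.1, hR.2.1, neg_neg]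

theorem sum_sectional_eq [FiniteDimensional ℝ V] (hR : IsCurvatureTensor R) {ι ι' : Type*}
    [Fintype ι] [Fintype ι'] (b : OrthonormalBasis ι ℝ V) (b' : OrthonormalBasis ι' ℝ V) :
    ∑ i, ∑ j, R (b i) (b j) (b i) (b j) = ∑ i, ∑ j, R (b' i) (b' j) (b' i) (b' j) := by
  have inner_sum (x : V) : ∑ j, R x (b j) x (b j) = ∑ j, R x (b' j) x (b' j) :=
    OrthonormalBasis.sum_apply_self_eq ((R x).flip x) b b'
  calc ∑ i, ∑ j, R (b i) (b j) (b i) (b j)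
      = ∑ j, ∑ i, R (b' j) (b i) (b' j) (b i) := by
        simp only [inner_sum, ← hR.sectional_comm (b' _) (b _)]
        exact Finset.sum_comm
    _ = _ := by simp only [inner_sum]

theorem polarization (hR : IsCurvatureTensor R) (x y z t : V) :
    R (x + z) (y + t) (x + z) (y + t) + R (x - z) (y - t) (x - z) (y - t)
      - R (x + z) (y - t) (x + z) (y - t) - R (x - z) (y + t) (x - z) (y + t)
      = 8 * (R x y z t + R x t z y) := by
  simp only [sub_eq_add_neg, ← neg_one_smul ℝ z, ← neg_one_smul ℝ t, map_add, map_smul,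
    LinearMap.add_apply, LinearMap.smul_apply, smul_eq_mul]
  linarith [hR.2.2.1 z y x t, hR.2.2.1 z t x y]

theorem apply_inv_sqrt_two_smul (a b : V) :
    R ((√2)⁻¹ • a) ((√2)⁻¹ • b) ((√2)⁻¹ • a) ((√2)⁻¹ • b) = R a b a b / 4 := by
  have h : (√2)⁻¹ ^ 4 = (4 : ℝ)⁻¹ := by
    rw [show (4 : ℕ) = 2 * 2 from rfl, pow_mul]; norm_num
  simp only [map_smul, LinearMap.smul_apply, smul_eq_mul]
  linear_combination R a b a b * h


theorem sum_sub_le_of_subset_offDiag (hR : IsCurvatureTensor R)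
    (hK : ∀ u v : V, ‖u‖ = 1 → ‖v‖ = 1 → ⟪u, v⟫ = 0 → m < R u v u v)
    {ι : Type*} [Fintype ι] [DecidableEq ι] (b : OrthonormalBasis ι ℝ V)
    {P : Finset (ι × ι)} (hP : P ⊆ Finset.univ.offDiag) :
    ∑ p ∈ P, (R (b p.1) (b p.2) (b p.1) (b p.2) - m) ≤
      ∑ i, ∑ j, R (b i) (b j) (b i) (b j) - Fintype.card ι * (Fintype.card ι - 1) * m := by
  set K : ι × ι → ℝ := fun p => R (b p.1) (b p.2) (b p.1) (b p.2)
  have hdiag : ∑ p ∈ Finset.univ.offDiag, K p = ∑ p, K p := by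
    refine Finset.sum_subset (Finset.subset_univ _) fun p _ hp => ?_
    obtain ⟨i, j⟩ := p
    obtain rfl : i = j := by simpa using hp
    exact hR.apply_self_left _ _ _
  have hcard : ((Finset.univ.offDiag : Finset (ι × ι)).card : ℝ) =
      Fintype.card ι * (Fintype.card ι - 1) := by
    rw [Finset.offDiag_card, Nat.cast_sub (Nat.le_mul_self _), Finset.card_univ]
    push_cast
    ring
  calc ∑ p ∈ P, (K p - m)
      ≤ ∑ p ∈ Finset.univ.offDiag, (K p - m) := by
        refine Finset.sum_le_sum_of_subset_of_nonneg hP fun p hp _ => sub_nonneg.2 (hK _ _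
          (b.orthonormal.1 _) (b.orthonormal.1 _) (b.orthonormal.2 ?_)).le
        exact (Finset.mem_offDiag.1 hp).2.2
    _ = _ := by
        rw [Finset.sum_sub_distrib, hdiag, Finset.sum_const, nsmul_eq_mul, hcard,
          Fintype.sum_prod_type]

theorem two_mul_sectional_add_le (hR : IsCurvatureTensor R)
    (hK : ∀ u v : V, ‖u‖ = 1 → ‖v‖ = 1 → ⟪u, v⟫ = 0 → m < R u v u v)
    {ι : Type*} [Fintype ι] (b : OrthonormalBasis ι ℝ V) {u₁ u₂ u₃ u₄ : V}
    (hf : OrthonormalFrame4 u₁ u₂ u₃ u₄) :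
    2 * (R u₁ u₂ u₁ u₂ + R u₃ u₄ u₃ u₄) ≤
      ∑ i, ∑ j, R (b i) (b j) (b i) (b j) - (Fintype.card ι * (Fintype.card ι - 1) - 4) * m := by
  classical
  have : FiniteDimensional ℝ V := .of_basis b.toBasis
  obtain ⟨s, b', e, hb'⟩ := hf.orthonormal.exists_orthonormalBasis_comp
  have he : Function.Injective e :=
    (hb' ▸ hf.orthonormal.linearIndependent.injective).of_comp
  have hcard : Fintype.card s = Fintype.card ι := by
    rw [← Module.finrank_eq_card_basis b.toBasis, Module.finrank_eq_card_basis b'.toBasis]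
  let Q : Finset (Fin 4 × Fin 4) := {(0, 1), (1, 0), (2, 3), (3, 2)}
  have hQ : Q.image (Prod.map e e) ⊆ Finset.univ.offDiag := by
    simp only [Finset.subset_iff, Finset.mem_image, Finset.mem_offDiag]
    rintro _ ⟨q, hq, rfl⟩
    exact ⟨Finset.mem_univ _, Finset.mem_univ _, he.ne (by fin_cases hq <;> decide)⟩
  have hsum := hR.sum_sub_le_of_subset_offDiag hK b' hQ
  rw [Finset.sum_image (he.prodMap he).injOn, hR.sum_sectional_eq b' b, hcard] at hsum
  have hb'e (k : Fin 4) : b' (e k) = ![u₁, u₂, u₃, u₄] k := congrFun hb' k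
  have hQsum : ∑ q ∈ Q, (R (b' (e q.1)) (b' (e q.2)) (b' (e q.1)) (b' (e q.2)) - m) =
      2 * (R u₁ u₂ u₁ u₂ + R u₃ u₄ u₃ u₄) - 4 * m := by
    simp [Q, hb'e, hR.sectional_comm u₁ u₂, hR.sectional_comm u₃ u₄]
    ring
  simp only [Prod.map_fst, Prod.map_snd] at hsum
  linarith

theorem apply_add_apply_lt (hR : IsCurvatureTensor R)
    (hK : ∀ u v : V, ‖u‖ = 1 → ‖v‖ = 1 → ⟪u, v⟫ = 0 → m < R u v u v)
    (hpair : ∀ u₁ u₂ u₃ u₄ : V, OrthonormalFrame4 u₁ u₂ u₃ u₄ →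
      R u₁ u₂ u₁ u₂ + R u₃ u₄ u₃ u₄ ≤ 8 * m)
    {x y z t : V} (hf : OrthonormalFrame4 x y z t) :
    R x y z t + R x t z y < 3 * m := by
  have hA := hf.rotate
  have h₁ := hpair _ _ _ _ hA
  obtain ⟨n₁, n₂, n₃, n₄, -, -, o₁₄, o₂₃, -, -⟩ := hA
  have h₂ := hK _ _ n₁ n₄ o₁₄
  have h₃ := hK _ _ n₃ n₂ (by rwa [real_inner_comm])
  simp only [apply_inv_sqrt_two_smul] at h₁ h₂ h₃
  linarith [hR.polarization x y z t]

theorem isotropic_pos (hR : IsCurvatureTensor R)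
    (hK : ∀ u v : V, ‖u‖ = 1 → ‖v‖ = 1 → ⟪u, v⟫ = 0 → m < R u v u v)
    (hpair : ∀ u₁ u₂ u₃ u₄ : V, OrthonormalFrame4 u₁ u₂ u₃ u₄ →
      R u₁ u₂ u₁ u₂ + R u₃ u₄ u₃ u₄ ≤ 8 * m)
    {f₁ f₂ f₃ f₄ : V} (hf : OrthonormalFrame4 f₁ f₂ f₃ f₄) :
    0 < R f₁ f₃ f₁ f₃ + R f₁ f₄ f₁ f₄ + R f₂ f₃ f₂ f₃ + R f₂ f₄ f₂ f₄ - 2 * R f₁ f₂ f₃ f₄ := by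
  have ⟨n₁, n₂, n₃, n₄, o₁₂, o₁₃, o₁₄, o₂₃, o₂₄, o₃₄⟩ := hf
  have hf' : OrthonormalFrame4 f₁ f₂ f₄ (-f₃) := by
    refine ⟨n₁, n₂, n₄, by rwa [norm_neg], o₁₂, o₁₄, ?_, o₂₄, ?_, ?_⟩ <;>
      simp [inner_neg_right, real_inner_comm, *]
  have h₁ := hR.apply_add_apply_lt hK hpair hf
  have h₂ := hR.apply_add_apply_lt hK hpair hf'
  simp only [map_neg, LinearMap.neg_apply] at h₂
  linarith [hK _ _ n₁ n₃ o₁₃, hK _ _ n₁ n₄ o₁₄, hK _ _ n₂ n₃ o₂₃, hK _ _ n₂ n₄ o₂₄,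
    hR.2.1 f₁ f₂ f₄ f₃, hR.2.1 f₁ f₄ f₃ f₂, hR.2.2.2 f₁ f₂ f₃ f₄]

end IsCurvatureTensor

theorem stmt_12 {V : Type*} [NormedAddCommGroup V] [InnerProductSpace ℝ V]
    (n : ℕ) (hn : 4 ≤ n) (b : OrthonormalBasis (Fin n) ℝ V)
    (R : V →ₗ[ℝ] V →ₗ[ℝ] V →ₗ[ℝ] V →ₗ[ℝ] ℝ) (hR : IsCurvatureTensor R)
    (S₀ : ℝ) (hS₀ : S₀ = (1 / ((n : ℝ) * ((n : ℝ) - 1))) *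
      ∑ i : Fin n, ∑ j : Fin n, R (b i) (b j) (b i) (b j))
    (hyp : ∀ u v : V, ‖u‖ = 1 → ‖v‖ = 1 → ⟪u, v⟫ = 0 →
      R u v u v > ((n : ℝ) * ((n : ℝ) - 1) / ((n : ℝ) ^ 2 - (n : ℝ) + 12)) * S₀) :
    ∀ f₁ f₂ f₃ f₄ : V, OrthonormalFrame4 f₁ f₂ f₃ f₄ →
      R f₁ f₃ f₁ f₃ + R f₁ f₄ f₁ f₄ + R f₂ f₃ f₂ f₃ + R f₂ f₄ f₂ f₄
        - 2 * R f₁ f₂ f₃ f₄ > 0 := by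
  set m := (n : ℝ) * ((n : ℝ) - 1) / ((n : ℝ) ^ 2 - (n : ℝ) + 12) * S₀ with hm
  have hscalar : ∑ i, ∑ j, R (b i) (b j) (b i) (b j) = ((n : ℝ) ^ 2 - n + 12) * m := by
    have hn' : (4 : ℝ) ≤ n := by exact_mod_cast hn
    have : (n : ℝ) - 1 ≠ 0 := by linarith
    have : (n : ℝ) * (n - 1) + 12 ≠ 0 := by nlinarith
    rw [hm, hS₀]
    field_simp
  refine fun f₁ f₂ f₃ f₄ hf => hR.isotropic_pos hyp (fun u₁ u₂ u₃ u₄ hu => ?_) hf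
  have := hR.two_mul_sectional_add_le hyp b hu
  rw [Fintype.card_fin, hscalar] at this
  linarith
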